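/- There exists a constant c > 0 such that for every X3S instance (𝒳, ℳ) with r := 3|ℳ| ≥ c, every surprise-optimal clustering ζ of the reduction graph G(𝒳, ℳ) satisfies i_p(ζ) − i_e(ζ) ≤ r⁴/2. -/

import Mathlib

/-!
Let `k = |ℳ|` and let `ζ₀` be the clustering of `G(𝒳, ℳ)` into the cliques `C(M)` and `V_𝒳`.
All intracluster pairs of `ζ₀` are edges, so its surprise is the single hypergeometric term
`C(p - a, m - a) / C(p, m)` with `a = i_p(ζ₀)`, and only the `m - a ≤ 27 k³` edges between the
cliques and `V_𝒳` lie outside its clusters. Each term of the surprise sum of an optimal `ζ` is at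
most `S(ζ) ≤ S(ζ₀)`. The term `i = m` forces `i_p(ζ) ≤ m + 10 k⁴`. The term `i = i_e(ζ)`, through
the identity `C(p, i) C(i, j) C(p - i, m - j) = C(p, m) C(m, j) C(p - m, i - j)`, bounds
`C(p - m, i_p - i_e)` by `(3k)^(20 k⁴)`; since `p ≈ 40 k⁶` is much larger than `m ≈ 40 k⁵`, that
binomial is at least `(k/2)^(i_p - i_e)`, whence `i_p - i_e ≤ 40 k⁴ ≤ r⁴ / 2`.
-/
open Finset

/-- The surprise value `S(p, m, i_p, i_e)`. -/
def surpriseVal (p m ip ie : ℕ) : ℚ :=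
  (∑ i ∈ Finset.Icc ie m, (ip.choose i * (p - ip).choose (m - i) : ℚ)) / (p.choose m)

variable {V : Type*} [Fintype V] [DecidableEq V]

open scoped Classical in
/-- The number of intracluster edges of the clustering `ζ`. -/
noncomputable def intraEdges (G : SimpleGraph V) (ζ : Finpartition (univ : Finset V)) : ℕ :=
  (G.edgeFinset.filter fun e => ∃ P ∈ ζ.parts, ∀ v ∈ e, v ∈ P).card

/-- The number of intracluster vertex pairs of the clustering `ζ`. -/
def intraPairs (ζ : Finpartition (univ : Finset V)) : ℕ :=
  ∑ P ∈ ζ.parts, (P.card).choose 2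

open scoped Classical in
/-- The surprise of the clustering `ζ` of the graph `G`. -/
noncomputable def surprise (G : SimpleGraph V) (ζ : Finpartition (univ : Finset V)) : ℚ :=
  surpriseVal ((Fintype.card V).choose 2) G.edgeFinset.card (intraPairs ζ) (intraEdges G ζ)

/-- The vertex type of the reduction graph for the X3S instance `(X, M)`: one clique
`C(M)` of `r² = (3|M|)²` vertices for each `M ∈ ℳ`, plus one vertex `v(x)` per `x ∈ X`. -/
abbrev RVertex {X : Type} (M : Finset (Finset X)) : Type :=
  ({s // s ∈ M} × Fin ((3 * M.card) ^ 2)) ⊕ X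

/-- The reduction graph `G(X, M)`: all pairs inside each clique `C(M)` are edges, all
pairs inside `V_X` are edges, and `v(x)` is joined to all of `C(M)` iff `x ∈ M`. -/
def reductionGraph {X : Type} (M : Finset (Finset X)) : SimpleGraph (RVertex M) where
  Adj u v :=
    match u, v with
    | Sum.inl (s, i), Sum.inl (t, j) => s = t ∧ i ≠ j
    | Sum.inl (s, _), Sum.inr x => x ∈ (s : Finset X)
    | Sum.inr x, Sum.inl (s, _) => x ∈ (s : Finset X)
    | Sum.inr x, Sum.inr y => x ≠ y
  symm := by
    refine ⟨?_⟩
    rintro (⟨s, i⟩ | x) (⟨t, j⟩ | y) h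
    · exact ⟨h.1.symm, fun hji => h.2 hji.symm⟩
    · exact h
    · exact h
    · exact fun hyx => h hyx.symm
  loopless := by
    refine ⟨?_⟩
    rintro (⟨s, i⟩ | x) h
    · exact h.2 rfl
    · exact h rfl

namespace Nat

theorem pow_le_choose_add {R v u : ℕ} (h : R * u ≤ v + 1) : R ^ u ≤ (v + u).choose u := by
  induction u with
  | zero => simp
  | succ u ih =>
    have hu : R ^ u ≤ (v + u).choose u := ih (le_trans (Nat.mul_le_mul_left R u.le_succ) h)
    refine Nat.le_of_mul_le_mul_right ?_ u.succ_pos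
    calc R ^ (u + 1) * (u + 1) = R ^ u * (R * (u + 1)) := by ring
      _ ≤ (v + u).choose u * (v + u + 1) := Nat.mul_le_mul hu (by omega)
      _ = (v + (u + 1)).choose (u + 1) * (u + 1) := by
        rw [mul_comm, add_one_mul_choose_eq, ← add_assoc]

theorem choose_le_choose_of_le_half {n r s : ℕ} (hrs : r ≤ s) (hs : s ≤ n / 2) :
    n.choose r ≤ n.choose s := by
  induction s, hrs using Nat.le_induction with
  | base => rfl
  | succ t _ ih => exact (ih (by omega)).trans (choose_le_succ_of_lt_half_left (by omega))

theorem choose_le_choose_mul_pow {p a B : ℕ} (hB : p ≤ B * (a + 1)) (ha : 2 * a ≤ p) (n : ℕ) :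
    p.choose n ≤ p.choose a * B ^ (n - a) := by
  rcases le_or_gt n a with hna | han
  · simpa [Nat.sub_eq_zero_of_le hna] using choose_le_choose_of_le_half hna (by omega)
  obtain ⟨s, rfl⟩ := Nat.exists_eq_add_of_le han.le
  rw [Nat.add_sub_cancel_left]
  clear han
  induction s with
  | zero => simp
  | succ s ih =>
    refine Nat.le_of_mul_le_mul_right ?_ (Nat.succ_pos (a + s))
    calc p.choose (a + s + 1) * (a + s + 1) = p.choose (a + s) * (p - (a + s)) :=
          choose_succ_right_eq p (a + s)
      _ ≤ (p.choose a * B ^ s) * (B * (a + s + 1)) := by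
          refine Nat.mul_le_mul ih ?_
          have : B * (a + 1) ≤ B * (a + s + 1) := Nat.mul_le_mul_left _ (by omega)
          omega
      _ = p.choose a * B ^ (s + 1) * (a + s + 1) := by ring

theorem choose_mul_choose_sub_comm (n a b : ℕ) :
    n.choose a * (n - a).choose b = n.choose b * (n - b).choose a := by
  rcases le_or_gt (a + b) n with h | h
  · have ea := choose_mul (n := n) (Nat.le_add_right a b)
    have eb := choose_mul (n := n) (Nat.le_add_left b a)
    rw [Nat.add_sub_cancel_left] at ea
    rw [Nat.add_sub_cancel] at eb
    rw [← ea, ← eb, choose_symm_add]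
  · have hz : ∀ c d, n < c + d → n.choose c * (n - c).choose d = 0 := fun c d hcd => by
      rcases le_or_gt c n with hc | hc
      · rw [choose_eq_zero_of_lt (show n - c < d by omega), mul_zero]
      · rw [choose_eq_zero_of_lt hc, zero_mul]
    rw [hz a b h, hz b a (by omega)]

/-- Both sides count the pairs `(A, B)` of subsets of an `n`-set with `#A = i`, `#B = m` and
`#(A ∩ B) = j`. -/
theorem choose_mul_choose_mul_choose_sub {n m i j : ℕ} (hji : j ≤ i) (hin : i ≤ n) (hjm : j ≤ m)
    (hmn : m ≤ n) :
    n.choose i * (i.choose j * (n - i).choose (m - j))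
      = n.choose m * (m.choose j * (n - m).choose (i - j)) := by
  have hswap := choose_mul_choose_sub_comm (n - j) (i - j) (m - j)
  rw [show n - j - (i - j) = n - i by omega, show n - j - (m - j) = n - m by omega] at hswap
  calc n.choose i * (i.choose j * (n - i).choose (m - j))
      = n.choose i * i.choose j * (n - i).choose (m - j) := by ring
    _ = n.choose j * ((n - j).choose (i - j) * (n - i).choose (m - j)) := by
        rw [choose_mul hji]; ring
    _ = n.choose j * (n - j).choose (m - j) * (n - m).choose (i - j) := by rw [hswap]; ring
    _ = _ := by rw [← choose_mul hjm]; ring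

theorem two_mul_choose_two_add_self (n : ℕ) : 2 * n.choose 2 + n = n ^ 2 := by
  induction n with
  | zero => rfl
  | succ n ih => rw [choose_succ_succ, choose_one_right]; nlinarith

variable {p m a B : ℕ}

theorem choose_sub_le_pow_mul_choose (hB : p ≤ B * (a + 1)) (ha : 2 * a ≤ p) (hma : a ≤ m) :
    (p - a).choose (m - a) ≤ B ^ (m - a) * m.choose a := by
  refine Nat.le_of_mul_le_mul_left ?_ (choose_pos (by omega : a ≤ p))
  calc p.choose a * (p - a).choose (m - a) = p.choose m * m.choose a := (choose_mul hma).symm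
    _ ≤ p.choose a * B ^ (m - a) * m.choose a :=
        Nat.mul_le_mul_right _ (choose_le_choose_mul_pow hB ha m)
    _ = p.choose a * (B ^ (m - a) * m.choose a) := by ring

theorem choose_sub_le_pow_mul_choose_of_choose_mul_choose_le {i j : ℕ} (hB : p ≤ B * (a + 1)) (ha : 2 * a ≤ p)
    (hma : a ≤ m) (hmp : m ≤ p) (hji : j ≤ i) (hip : i ≤ p) (hjm : j ≤ m)
    (h : i.choose j * (p - i).choose (m - j) ≤ (p - a).choose (m - a)) :
    (p - m).choose (i - j) ≤ B ^ (i - a) * m.choose a := by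
  have hpm : 0 < p.choose m := choose_pos hmp
  have key : p.choose m * (m.choose j * (p - m).choose (i - j))
      ≤ p.choose m * (B ^ (i - a) * m.choose a) :=
    calc p.choose m * (m.choose j * (p - m).choose (i - j))
        = p.choose i * (i.choose j * (p - i).choose (m - j)) :=
          (choose_mul_choose_mul_choose_sub hji hip hjm hmp).symm
      _ ≤ p.choose a * B ^ (i - a) * (p - a).choose (m - a) :=
          Nat.mul_le_mul (choose_le_choose_mul_pow hB ha i) h
      _ = B ^ (i - a) * (p.choose a * (p - a).choose (m - a)) := by ring
      _ = p.choose m * (B ^ (i - a) * m.choose a) := by rw [← choose_mul hma]; ring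
  calc (p - m).choose (i - j) ≤ m.choose j * (p - m).choose (i - j) :=
        Nat.le_mul_of_pos_left _ (choose_pos hjm)
    _ ≤ B ^ (i - a) * m.choose a := Nat.le_of_mul_le_mul_left key hpm

end Nat

/-- The sizes of the reduction graph for `k = |ℳ| ≥ 100`: `a = i_p` of the clustering into the
cliques `C(M)` and `V_𝒳`, `m` edges and `p` vertex pairs. -/
structure ReductionSizes (k a m p : ℕ) : Prop where
  k_ge : 100 ≤ k
  a_ge : 36 * k ^ 5 ≤ a
  a_le_m : a ≤ m
  m_le_a_add : m ≤ a + 27 * k ^ 3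
  m_le : m ≤ 41 * k ^ 5
  p_ge : 40 * k ^ 6 ≤ p
  p_le : p ≤ 41 * k ^ 6

namespace ReductionSizes

variable {k a m p : ℕ}

theorem of_eq {x : ℕ} (hk : 100 ≤ k) (hx : x ≤ 3 * k)
    (ha : a = x.choose 2 + k * ((3 * k) ^ 2).choose 2) (hp : p = (k * (3 * k) ^ 2 + x).choose 2)
    (hma : a ≤ m) (hm : m ≤ a + 27 * k ^ 3) : ReductionSizes k a m p := by
  have h2a : 2 * a + 9 * k ^ 3 + x = 81 * k ^ 5 + x ^ 2 := by
    have hc := congrArg (k * ·) (Nat.two_mul_choose_two_add_self ((3 * k) ^ 2))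
    have hcx := Nat.two_mul_choose_two_add_self x
    subst ha
    linear_combination hc + hcx
  have h2p : 2 * p + 9 * k ^ 3 + x = (9 * k ^ 3 + x) ^ 2 := by
    subst hp
    linear_combination Nat.two_mul_choose_two_add_self (k * (3 * k) ^ 2 + x)
  have hk3 : 100 * k ^ 2 ≤ k ^ 3 := by nlinarith
  have hk5 : 100 * k ^ 4 ≤ k ^ 5 := by nlinarith
  have hx2 : x ^ 2 ≤ 9 * k ^ 2 := by nlinarith
  refine ⟨hk, ?_, hma, hm, ?_, ?_, ?_⟩
  · nlinarith
  · nlinarith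
  · nlinarith
  · nlinarith

theorem hundred_mul_pow_le (h : ReductionSizes k a m p) (n : ℕ) : 100 * k ^ n ≤ k ^ (n + 1) := by
  rw [pow_succ, mul_comm]
  exact Nat.mul_le_mul_left _ h.k_ge

theorem le_three_mul (h : ReductionSizes k a m p) : p ≤ 3 * k * (a + 1) := by
  have := h.k_ge; have := h.a_ge; have := h.p_le
  nlinarith

theorem two_mul_le (h : ReductionSizes k a m p) : 2 * a ≤ p := by
  have := h.k_ge; have := h.a_le_m; have := h.m_le; have := h.p_ge
  nlinarith

theorem choose_le (h : ReductionSizes k a m p) : m.choose a ≤ (3 * k) ^ (5 * (m - a)) := by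
  have hm : m ≤ (3 * k) ^ 5 := by have := h.m_le; nlinarith
  calc m.choose a = m.choose (m - a) := (Nat.choose_symm h.a_le_m).symm
    _ ≤ m ^ (m - a) := Nat.choose_le_pow _ _
    _ ≤ ((3 * k) ^ 5) ^ (m - a) := Nat.pow_le_pow_left hm _
    _ = (3 * k) ^ (5 * (m - a)) := by rw [← pow_mul]

theorem le_add_of_choose_le (h : ReductionSizes k a m p) {i : ℕ}
    (hi : i.choose m ≤ (p - a).choose (m - a)) : i ≤ m + 10 * k ^ 4 := by
  by_contra! hlt
  have hk := h.k_ge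
  have hB : 1 < 3 * k := by omega
  have hlow : (3 * k) ^ (10 * k ^ 4) ≤ i.choose m :=
    calc (3 * k) ^ (10 * k ^ 4) ≤ (m + 10 * k ^ 4).choose (10 * k ^ 4) :=
          Nat.pow_le_choose_add (by have := h.a_ge; have := h.a_le_m; nlinarith)
      _ = (m + 10 * k ^ 4).choose m := Nat.choose_symm_add.symm
      _ ≤ i.choose m := Nat.choose_le_choose m hlt.le
  have hup : i.choose m ≤ (3 * k) ^ (6 * (m - a)) :=
    calc i.choose m ≤ (3 * k) ^ (m - a) * m.choose a :=
          hi.trans (Nat.choose_sub_le_pow_mul_choose h.le_three_mul h.two_mul_le h.a_le_m)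
      _ ≤ (3 * k) ^ (m - a) * (3 * k) ^ (5 * (m - a)) := Nat.mul_le_mul_left _ h.choose_le
      _ = (3 * k) ^ (6 * (m - a)) := by rw [← pow_add]; ring_nf
  have := (Nat.pow_le_pow_iff_right hB).mp (hlow.trans hup)
  have := h.m_le_a_add
  have : 100 * k ^ 3 ≤ k ^ 4 := h.hundred_mul_pow_le 3
  have : 0 < k ^ 3 := by positivity
  omega

theorem sub_le_of_choose_mul_choose_le (h : ReductionSizes k a m p) {i j : ℕ} (hji : j ≤ i)
    (hjm : j ≤ m) (hsum : i + m ≤ p + j) (hi : i ≤ m + 10 * k ^ 4)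
    (hij : i.choose j * (p - i).choose (m - j) ≤ (p - a).choose (m - a)) :
    i - j ≤ 40 * k ^ 4 := by
  have hk := h.k_ge
  have hk4 : 100 * k ^ 3 ≤ k ^ 4 := h.hundred_mul_pow_le 3
  have hk5 : 100 * k ^ 4 ≤ k ^ 5 := h.hundred_mul_pow_le 4
  have hk6 : 100 * k ^ 5 ≤ k ^ 6 := h.hundred_mul_pow_le 5
  set R := k / 2
  have hR1 : 1 < R := by omega
  have hBR : 3 * k ≤ R ^ 2 := by
    have : 7 ≤ R := by omega
    have : k ≤ 2 * R + 1 := by omega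
    nlinarith
  have hd : i - j ≤ 42 * k ^ 5 := by have := h.m_le; omega
  have hlow : R ^ (i - j) ≤ (p - m).choose (i - j) := by
    have hRd : R * (i - j) ≤ 21 * k ^ 6 := by
      have : 2 * R * (i - j) ≤ k * (42 * k ^ 5) := Nat.mul_le_mul (by omega) hd
      have : k * (42 * k ^ 5) = 42 * k ^ 6 := by ring
      nlinarith
    have := Nat.pow_le_choose_add (R := R) (v := p - m - (i - j)) (u := i - j)
      (by have := h.p_ge; have := h.m_le; omega)
    rwa [Nat.sub_add_cancel (by omega)] at this
  have hup : (p - m).choose (i - j) ≤ (R ^ 2) ^ (20 * k ^ 4) :=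
    calc (p - m).choose (i - j) ≤ (3 * k) ^ (i - a) * (3 * k) ^ (5 * (m - a)) :=
          (Nat.choose_sub_le_pow_mul_choose_of_choose_mul_choose_le h.le_three_mul h.two_mul_le h.a_le_m
            (by omega) hji (by omega) hjm hij).trans
            (Nat.mul_le_mul_left _ h.choose_le)
      _ = (3 * k) ^ (i - a + 5 * (m - a)) := by rw [← pow_add]
      _ ≤ (3 * k) ^ (20 * k ^ 4) :=
          Nat.pow_le_pow_right (by omega) (by have := h.m_le_a_add; omega)
      _ ≤ (R ^ 2) ^ (20 * k ^ 4) := Nat.pow_le_pow_left hBR _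
  rw [← pow_mul] at hup
  have := (Nat.pow_le_pow_iff_right hR1).mp (hlow.trans hup)
  omega

end ReductionSizes

section Clustering

namespace Finpartition

open scoped Classical in
def intraPairFinset (ζ : Finpartition (univ : Finset V)) : Finset (Sym2 V) :=
  {e | ¬ e.IsDiag ∧ ∃ P ∈ ζ.parts, ∀ v ∈ e, v ∈ P}

variable {ζ : Finpartition (univ : Finset V)}

theorem mem_intraPairFinset {e : Sym2 V} :
    e ∈ ζ.intraPairFinset ↔ ¬ e.IsDiag ∧ ∃ P ∈ ζ.parts, ∀ v ∈ e, v ∈ P := by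
  simp [intraPairFinset]

theorem mk_mem_intraPairFinset {u v : V} :
    s(u, v) ∈ ζ.intraPairFinset ↔ u ≠ v ∧ u ∈ ζ.part v := by
  simp [mem_intraPairFinset, mem_part_iff_exists]

theorem intraPairFinset_eq_biUnion :
    ζ.intraPairFinset = ζ.parts.biUnion fun P => P.offDiag.image Sym2.mk.uncurry := by
  ext e
  induction e with
  | _ u v =>
    simp only [mk_mem_intraPairFinset, mem_part_iff_exists, mem_biUnion, mem_image, mem_offDiag,
      Prod.exists, Function.uncurry_apply_pair, Sym2.eq_iff]
    grind

theorem card_intraPairFinset : #ζ.intraPairFinset = intraPairs ζ := by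
  rw [intraPairFinset_eq_biUnion, card_biUnion]
  · exact sum_congr rfl fun P _ => Sym2.card_image_offDiag P
  · intro P hP Q hQ hPQ
    simp only [Function.onFun, disjoint_left, mem_image, mem_offDiag, Prod.exists,
      Function.uncurry_apply_pair, not_exists, not_and]
    rintro _ ⟨u, v, ⟨hu, hv, -⟩, rfl⟩ u' v' ⟨hu', hv', -⟩ he
    rw [Sym2.eq_iff] at he
    rcases he with ⟨rfl, -⟩ | ⟨-, rfl⟩
    · exact hPQ (ζ.eq_of_mem_parts hP hQ hu hu')
    · exact hPQ (ζ.eq_of_mem_parts hP hQ hu hv')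

end Finpartition

open scoped Classical

variable {G : SimpleGraph V} {ζ : Finpartition (univ : Finset V)}

theorem intraEdges_eq_card_inter : intraEdges G ζ = #(G.edgeFinset ∩ ζ.intraPairFinset) := by
  unfold intraEdges
  congr 1
  ext e
  simp only [mem_filter, mem_inter, Finpartition.mem_intraPairFinset]
  exact ⟨fun ⟨he, hP⟩ => ⟨he, G.not_isDiag_of_mem_edgeFinset he, hP⟩, fun ⟨he, _, hP⟩ => ⟨he, hP⟩⟩

theorem intraEdges_le_intraPairs : intraEdges G ζ ≤ intraPairs ζ := by
  rw [intraEdges_eq_card_inter, ← ζ.card_intraPairFinset]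
  exact card_le_card inter_subset_right

theorem intraEdges_le_card_edgeFinset : intraEdges G ζ ≤ #G.edgeFinset := by
  rw [intraEdges_eq_card_inter]
  exact card_le_card inter_subset_left

theorem intraPairs_add_card_edgeFinset_le :
    intraPairs ζ + #G.edgeFinset ≤ (Fintype.card V).choose 2 + intraEdges G ζ := by
  rw [← ζ.card_intraPairFinset, intraEdges_eq_card_inter, inter_comm,
    ← card_union_add_card_inter, ← Sym2.card_subtype_not_diag, Fintype.card_subtype]
  refine Nat.add_le_add_right (card_le_card fun e he => ?_) _
  rcases mem_union.mp he with he | he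
  · simpa using (Finpartition.mem_intraPairFinset.mp he).1
  · simpa using G.not_isDiag_of_mem_edgeFinset he

theorem intraEdges_eq_intraPairs_of_adj (h : ∀ u v, u ≠ v → u ∈ ζ.part v → G.Adj u v) :
    intraEdges G ζ = intraPairs ζ := by
  rw [intraEdges_eq_card_inter, ← ζ.card_intraPairFinset, inter_eq_right.mpr]
  intro e
  induction e with
  | _ u v =>
    rw [Finpartition.mk_mem_intraPairFinset, SimpleGraph.mem_edgeFinset]
    exact fun ⟨huv, hu⟩ => h u v huv hu

theorem card_edgeFinset_le_intraEdges_add (F : Finset (Sym2 V))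
    (hF : ∀ u v, G.Adj u v → u ∉ ζ.part v → s(u, v) ∈ F) :
    #G.edgeFinset ≤ intraEdges G ζ + #F := by
  rw [intraEdges_eq_card_inter, ← card_inter_add_card_sdiff G.edgeFinset ζ.intraPairFinset]
  refine Nat.add_le_add_left (card_le_card fun e he => ?_) _
  induction e with
  | _ u v =>
    rw [mem_sdiff, SimpleGraph.mem_edgeFinset, Finpartition.mk_mem_intraPairFinset] at he
    exact hF u v he.1 fun hu => he.2 ⟨he.1.ne, hu⟩

theorem surpriseVal_self {p m a : ℕ} (ham : a ≤ m) :
    surpriseVal p m a a = ((p - a).choose (m - a) : ℚ) / p.choose m := by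
  unfold surpriseVal
  rw [sum_eq_single_of_mem a (by simp [ham])]
  · simp
  · intro i hi hia
    rw [Nat.choose_eq_zero_of_lt (by grind)]
    simp

theorem choose_mul_choose_div_le_surpriseVal {p m ip ie i : ℕ} (hi : i ∈ Icc ie m) :
    (ip.choose i * (p - ip).choose (m - i) : ℚ) / p.choose m ≤ surpriseVal p m ip ie := by
  unfold surpriseVal
  gcongr
  exact single_le_sum (f := fun i => (ip.choose i * (p - ip).choose (m - i) : ℚ))
    (fun _ _ => by positivity) hi

theorem choose_mul_choose_le_of_surprise_le {ζ₀ : Finpartition (univ : Finset V)}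
    (hopt : surprise G ζ ≤ surprise G ζ₀) (h₀ : intraEdges G ζ₀ = intraPairs ζ₀) {i : ℕ}
    (hi : i ∈ Icc (intraEdges G ζ) #G.edgeFinset) :
    (intraPairs ζ).choose i * ((Fintype.card V).choose 2 - intraPairs ζ).choose (#G.edgeFinset - i)
      ≤ ((Fintype.card V).choose 2 - intraPairs ζ₀).choose (#G.edgeFinset - intraPairs ζ₀) := by
  have hm : 0 < ((Fintype.card V).choose 2).choose #G.edgeFinset :=
    Nat.choose_pos G.card_edgeFinset_le_card_choose_two
  have key := (choose_mul_choose_div_le_surpriseVal hi).trans hopt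
  rw [surprise, h₀, surpriseVal_self (h₀ ▸ intraEdges_le_card_edgeFinset),
    div_le_div_iff_of_pos_right (by exact_mod_cast hm)] at key
  exact_mod_cast key

instance {α κ : Type*} [DecidableEq κ] (f : α → κ) : DecidableRel (Setoid.ker f).r :=
  fun a b => decEq (f a) (f b)

variable {κ : Type*} [DecidableEq κ]

theorem mem_part_ofSetoid_ker {f : V → κ} {u v : V} :
    u ∈ (Finpartition.ofSetoid (Setoid.ker f)).part v ↔ f v = f u :=
  Finpartition.mem_part_ofSetoid_iff_rel

theorem intraPairs_ofSetoid_ker [Fintype κ] (f : V → κ) :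
    intraPairs (Finpartition.ofSetoid (Setoid.ker f)) = ∑ c, (#{v | f v = c}).choose 2 := by
  have hparts : (Finpartition.ofSetoid (Setoid.ker f)).parts
      = (univ.image f).image fun c => ({v | f v = c} : Finset V) := by
    rw [Finpartition.ofSetoid, Finpartition.ofSetSetoid_parts, image_image]
    congr 1
    ext a v
    simp [eq_comm]
  rw [intraPairs, hparts, sum_image]
  · refine sum_subset (subset_univ _) fun c _ hc => ?_
    rw [filter_false_of_mem fun v _ hv => hc (mem_image.mpr ⟨v, mem_univ v, hv⟩)]
    rfl
  · intro c hc c' _ hcc'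
    obtain ⟨v, -, rfl⟩ := mem_image.mp hc
    simpa using (Finset.ext_iff.mp hcc' v).symm

end Clustering

section Reduction

variable {X : Type} (M : Finset (Finset X))

def cluster : RVertex M → Option {s // s ∈ M}
  | Sum.inl (s, _) => some s
  | Sum.inr _ => none

theorem reductionGraph_adj_of_cluster_eq {u v : RVertex M} (huv : u ≠ v)
    (h : cluster M u = cluster M v) : (reductionGraph M).Adj u v := by
  rcases u with ⟨s, i⟩ | x <;> rcases v with ⟨t, j⟩ | y <;> simp_all [cluster, reductionGraph]

variable [Fintype X]

theorem card_rVertex : Fintype.card (RVertex M) = #M * (3 * #M) ^ 2 + Fintype.card X := by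
  simp [Fintype.card_sum]

variable [DecidableEq X]

abbrev cliqueClustering : Finpartition (univ : Finset (RVertex M)) :=
  Finpartition.ofSetoid (Setoid.ker (cluster M))

theorem card_le_three_mul (h3 : ∀ s ∈ M, #s = 3) (hcover : ∀ x : X, ∃ s ∈ M, x ∈ s) :
    Fintype.card X ≤ 3 * #M :=
  calc Fintype.card X = #(M.biUnion id) := by
        rw [← card_univ, (eq_univ_iff_forall (s := M.biUnion id)).mpr (by simpa using hcover)]
    _ ≤ ∑ s ∈ M, #s := card_biUnion_le
    _ = 3 * #M := by rw [sum_congr rfl h3, sum_const, smul_eq_mul, mul_comm]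

theorem intraEdges_cliqueClustering :
    intraEdges (reductionGraph M) (cliqueClustering M) = intraPairs (cliqueClustering M) :=
  intraEdges_eq_intraPairs_of_adj fun _ _ huv hu =>
    reductionGraph_adj_of_cluster_eq M huv (mem_part_ofSetoid_ker.mp hu).symm

theorem intraPairs_cliqueClustering :
    intraPairs (cliqueClustering M) = (Fintype.card X).choose 2 + #M * ((3 * #M) ^ 2).choose 2 := by
  rw [intraPairs_ofSetoid_ker, Fintype.sum_option]
  simp only [card_filter, Fintype.sum_sum_type, Fintype.sum_prod_type]
  simp [cluster]

open scoped Classical in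
theorem card_edgeFinset_reductionGraph_le (h3 : ∀ s ∈ M, #s = 3) :
    #(reductionGraph M).edgeFinset
      ≤ intraEdges (reductionGraph M) (cliqueClustering M) + 27 * #M ^ 3 := by
  let cross : Finset (Sym2 (RVertex M)) :=
    ({q : {s // s ∈ M} × Fin ((3 * #M) ^ 2) × X | q.2.2 ∈ q.1.1} : Finset _).image
      fun q => s(Sum.inl (q.1, q.2.1), Sum.inr q.2.2)
  have hcross : #cross ≤ 27 * #M ^ 3 := by
    refine card_image_le.trans (le_of_eq ?_)
    simp only [card_filter, Fintype.sum_prod_type]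
    simp [h3]
    ring
  refine (card_edgeFinset_le_intraEdges_add cross ?_).trans (Nat.add_le_add_left hcross _)
  intro u v huv hu
  rw [mem_part_ofSetoid_ker] at hu
  rcases u with ⟨s, i⟩ | x <;> rcases v with ⟨t, j⟩ | y
  · exact absurd (congrArg some huv.1.symm) hu
  · exact mem_image.mpr ⟨(s, i, y), mem_filter.mpr ⟨mem_univ _, huv⟩, rfl⟩
  · exact mem_image.mpr ⟨(t, j, x), mem_filter.mpr ⟨mem_univ _, huv⟩, Sym2.eq_swap⟩
  · exact absurd rfl hu

open scoped Classical in
theorem reductionSizes (hk : 100 ≤ #M) (h3 : ∀ s ∈ M, #s = 3)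
    (hcover : ∀ x : X, ∃ s ∈ M, x ∈ s) :
    ReductionSizes #M (intraPairs (cliqueClustering M)) #(reductionGraph M).edgeFinset
      ((Fintype.card (RVertex M)).choose 2) :=
  .of_eq hk (card_le_three_mul M h3 hcover) (intraPairs_cliqueClustering M)
    (by rw [card_rVertex]) (intraEdges_cliqueClustering M ▸ intraEdges_le_card_edgeFinset)
    (intraEdges_cliqueClustering M ▸ card_edgeFinset_reductionGraph_le M h3)

end Reduction

/-- There is a constant `c > 0` such that for every X3S instance `(X, M)` with
`r := 3|M| ≥ c`, every surprise-optimal clustering `ζ` of the reduction graph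
satisfies `i_p(ζ) − i_e(ζ) ≤ r⁴/2`. -/
theorem stmt15 :
    ∃ c : ℕ, 0 < c ∧
      ∀ (X : Type) [Fintype X] [DecidableEq X] (M : Finset (Finset X)),
        M.Nonempty → (∀ s ∈ M, s.card = 3) → (∀ x : X, ∃ s ∈ M, x ∈ s) →
        c ≤ 3 * M.card →
        ∀ ζ : Finpartition (univ : Finset (RVertex M)),
          (∀ ζ' : Finpartition (univ : Finset (RVertex M)),
            surprise (reductionGraph M) ζ ≤ surprise (reductionGraph M) ζ') →
          (intraPairs ζ : ℚ) - (intraEdges (reductionGraph M) ζ : ℚ)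
            ≤ (3 * M.card : ℚ) ^ 4 / 2 := by
  refine ⟨300, by norm_num, fun X _ _ M _ h3 hcover hc ζ hopt => ?_⟩
  have h₀ := intraEdges_cliqueClustering M
  have hsizes := reductionSizes M (by omega) h3 hcover
  have hie : intraEdges (reductionGraph M) ζ ≤ intraPairs ζ := intraEdges_le_intraPairs
  have hm := intraEdges_le_card_edgeFinset (G := reductionGraph M) (ζ := ζ)
  have hip := hsizes.le_add_of_choose_le (by
    simpa using choose_mul_choose_le_of_surprise_le (hopt _) h₀ (mem_Icc.mpr ⟨hm, le_rfl⟩))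
  have hd := hsizes.sub_le_of_choose_mul_choose_le hie hm intraPairs_add_card_edgeFinset_le hip
    (choose_mul_choose_le_of_surprise_le (hopt _) h₀ (mem_Icc.mpr ⟨le_rfl, hm⟩))
  have hdq : ((intraPairs ζ - intraEdges (reductionGraph M) ζ : ℕ) : ℚ) ≤ 40 * (#M : ℚ) ^ 4 := by
    exact_mod_cast hd
  rw [Nat.cast_sub hie] at hdq
  linarith [show (0 : ℚ) ≤ (#M : ℚ) ^ 4 by positivity]
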